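/- Let A ⊆ ℝⁿ be nonempty and reflection-invariant and B := A ∩ ℝ≥0ⁿ. If p is a best approximation to x from A, then |p| (entrywise absolute value) is a best approximation to |x| from B. -/

import Mathlib

noncomputable section

def projSet {n : ℕ} (M : Set (EuclideanSpace ℝ (Fin n))) (x : EuclideanSpace ℝ (Fin n)) :
    Set (EuclideanSpace ℝ (Fin n)) :=
  {p | p ∈ M ∧ ∀ q ∈ M, ‖p - x‖ ≤ ‖q - x‖}

def ReflInvariant {n : ℕ} (M : Set (EuclideanSpace ℝ (Fin n))) : Prop :=
  ∀ x ∈ M, ∀ b : Fin n → ℝ, (∀ i, b i = 1 ∨ b i = -1) →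
    (WithLp.toLp 2 (fun i => b i * x i) : EuclideanSpace ℝ (Fin n)) ∈ M

/-
Coordinatewise ||p i| - |x i|| ≤ |p i - x i|, so |p| is at least as close to |x| as p is to x.
For q ∈ B, let σq be q with its signs flipped along those of x: it lies in A, and
‖σq - x‖ = ‖q - |x|‖. Optimality of p in A closes the chain
‖|p| - |x|‖ ≤ ‖p - x‖ ≤ ‖σq - x‖ = ‖q - |x|‖, and |p| ∈ B by reflection invariance.
-/

namespace EuclideanSpace

variable {ι : Type*} [Fintype ι]

theorem norm_le_norm_of_abs_le_abs {u v : EuclideanSpace ℝ ι} (h : ∀ i, |u i| ≤ |v i|) :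
    ‖u‖ ≤ ‖v‖ := by
  rw [EuclideanSpace.norm_eq, EuclideanSpace.norm_eq]
  gcongr with i
  simpa only [Real.norm_eq_abs] using h i

theorem norm_eq_norm_of_abs_eq_abs {u v : EuclideanSpace ℝ ι} (h : ∀ i, |u i| = |v i|) :
    ‖u‖ = ‖v‖ :=
  le_antisymm (norm_le_norm_of_abs_le_abs fun i => (h i).le)
    (norm_le_norm_of_abs_le_abs fun i => (h i).ge)

theorem norm_abs_sub_abs_le (p x : EuclideanSpace ℝ ι) :
    ‖(WithLp.toLp 2 (fun i => |p i|) - WithLp.toLp 2 (fun i => |x i|) : EuclideanSpace ℝ ι)‖ ≤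
      ‖p - x‖ :=
  norm_le_norm_of_abs_le_abs fun i => abs_abs_sub_abs_le_abs_sub (p i) (x i)

end EuclideanSpace

/-- Unlike `SignType.sign`, this never vanishes, so it is an admissible reflection. -/
def signChoice {ι : Type*} (x : ι → ℝ) (i : ι) : ℝ :=
  if 0 ≤ x i then 1 else -1

theorem signChoice_eq_one_or_neg_one {ι : Type*} (x : ι → ℝ) (i : ι) :
    signChoice x i = 1 ∨ signChoice x i = -1 := by
  unfold signChoice
  split_ifs <;> simp

theorem signChoice_mul_self {ι : Type*} (x : ι → ℝ) (i : ι) : signChoice x i * x i = |x i| := by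
  unfold signChoice
  split_ifs with h
  · rw [one_mul, abs_of_nonneg h]
  · rw [neg_one_mul, abs_of_neg (not_le.mp h)]

theorem abs_mul_sub_eq_abs_sub_mul {s a b : ℝ} (hs : s = 1 ∨ s = -1) :
    |s * a - b| = |a - s * b| := by
  rcases hs with rfl | rfl
  · simp only [one_mul]
  · rw [← abs_neg]; ring_nf

theorem ReflInvariant.abs_mem {n : ℕ} {A : Set (EuclideanSpace ℝ (Fin n))} (hA : ReflInvariant A)
    {p : EuclideanSpace ℝ (Fin n)} (hp : p ∈ A) :
    (WithLp.toLp 2 (fun i => |p i|) : EuclideanSpace ℝ (Fin n)) ∈ A := by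
  simpa only [signChoice_mul_self] using hA p hp (signChoice p) (signChoice_eq_one_or_neg_one p)

theorem abs_of_proj_is_proj_onto_nonneg_part_general
    {n : ℕ} (A : Set (EuclideanSpace ℝ (Fin n)))
    (hrefl : ReflInvariant A)
    (B : Set (EuclideanSpace ℝ (Fin n)))
    (hB : B = A ∩ {y | ∀ i, 0 ≤ y i})
    (x p : EuclideanSpace ℝ (Fin n)) (hp : p ∈ projSet A x) :
    (WithLp.toLp 2 (fun i => |p i|) : EuclideanSpace ℝ (Fin n)) ∈
      projSet B (WithLp.toLp 2 (fun i => |x i|) : EuclideanSpace ℝ (Fin n)) := by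
  obtain ⟨hpA, hp_min⟩ := hp
  subst hB
  refine ⟨⟨hrefl.abs_mem hpA, fun i => abs_nonneg (p i)⟩, ?_⟩
  rintro q ⟨hqA, -⟩
  have hσq := hrefl q hqA (signChoice x) (signChoice_eq_one_or_neg_one x)
  calc _ ≤ ‖p - x‖ := EuclideanSpace.norm_abs_sub_abs_le p x
    _ ≤ ‖(WithLp.toLp 2 (fun i => signChoice x i * q i) : EuclideanSpace ℝ (Fin n)) - x‖ :=
      hp_min _ hσq
    _ = _ := EuclideanSpace.norm_eq_norm_of_abs_eq_abs fun i => by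
      have h := abs_mul_sub_eq_abs_sub_mul (a := q i) (b := x i) (signChoice_eq_one_or_neg_one x i)
      rwa [signChoice_mul_self] at h

theorem abs_of_proj_is_proj_onto_nonneg_part
    {n : ℕ} (A : Set (EuclideanSpace ℝ (Fin n))) (hA : A.Nonempty)
    (hrefl : ReflInvariant A)
    (B : Set (EuclideanSpace ℝ (Fin n)))
    (hB : B = A ∩ {y | ∀ i, 0 ≤ y i})
    (x p : EuclideanSpace ℝ (Fin n)) (hp : p ∈ projSet A x) :
    (WithLp.toLp 2 (fun i => |p i|) : EuclideanSpace ℝ (Fin n)) ∈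
      projSet B (WithLp.toLp 2 (fun i => |x i|) : EuclideanSpace ℝ (Fin n)) :=
  abs_of_proj_is_proj_onto_nonneg_part_general A hrefl B hB x p hp

end
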